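/- arXiv:2501.15556 — 5 statements merged into one kernel-verified Lean document; each statement's English description precedes it below -/
import Mathlib

section
/- Let v₁, v₂ : ℝⁿ → ℝⁿ be continuously differentiable vector fields with flows Φ₁, Φ₂ (i.e. Φₐ(0,x) = x and ∂Φₐ/∂t(t,x) = vₐ(Φₐ(t,x)) for t near 0). Then for each fixed x, as (t₁,t₂) → (0,0), Φ₂(t₂, Φ₁(t₁, x)) = x + t₁·v₁(x) + t₂·v₂(x) + t₁t₂·Dv₂(x)v₁(x) + (t₁²/2)·Dv₁(x)v₁(x) + (t₂²/2)·Dv₂(x)v₂(x) + o(t₁² + t₂²). -/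
/-!
For a flow `Φ` of `v` and a starting point `y = x + h` near `x`, the a priori bound
`‖Φ s y - y‖ ≤ M |s|` keeps the trajectory near `x`, so the velocity along it is
`v (Φ s y) = v x + Dv(x) h + s • Dv(x) (v x) + o(‖h‖ + |s|)`, uniformly for `|s| ≤ |t|`.
Integrating in `s` gives
`Φ t y = y + t • (v x + Dv(x) h) + (t² / 2) • Dv(x) (v x) + o(|t| (‖h‖ + |t|))`.
Apply this to `Φ₁` with `h = 0`, then to `Φ₂` with `h = Φ₁ t₁ x - x = t₁ • v₁ x + o(t₁)`,
and add the two expansions.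
-/

open Asymptotics Topology Set Filter Metric

section Slices

variable {α G : Type*} [NormedAddCommGroup α] [NormedAddCommGroup G] [NormedSpace ℝ G]

theorem isLittleO_sub_of_hasDerivAt {f f' : α × ℝ → G} (k : ℕ)
    (hf : ∀ᶠ p in 𝓝 0, HasDerivAt (fun s => f (p.1, s)) (f' p) p.2)
    (hf' : f' =o[𝓝 0] fun p => ‖p‖ ^ k) :
    (fun p => f p - f (p.1, 0)) =o[𝓝 0] fun p => p.2 * ‖p‖ ^ k := by
  refine isLittleO_iff.2 fun c hc => ?_
  obtain ⟨ε, hε, hball⟩ := eventually_nhds_iff_ball.1 (hf.and (hf'.bound hc))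
  filter_upwards [ball_mem_nhds 0 hε] with p hp
  have hslice : ∀ s ∈ uIcc 0 p.2, ‖(p.1, s)‖ ≤ ‖p‖ := fun s hs =>
    max_le_max le_rfl (by simpa using abs_sub_left_of_mem_uIcc hs)
  have hmem : ∀ s ∈ uIcc 0 p.2, (p.1, s) ∈ ball 0 ε := fun s hs =>
    mem_ball_zero_iff.2 ((hslice s hs).trans_lt (mem_ball_zero_iff.1 hp))
  have hmvt := (convex_uIcc 0 p.2).norm_image_sub_le_of_norm_hasDerivWithin_le
    (f := fun s => f (p.1, s)) (C := c * ‖p‖ ^ k)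
    (fun s hs => (hball _ (hmem s hs)).1.hasDerivWithinAt)
    (fun s hs => (hball _ (hmem s hs)).2.trans (by
      simp only [norm_pow, norm_norm]
      gcongr
      exact hslice s hs)) left_mem_uIcc right_mem_uIcc
  simpa [norm_mul, norm_pow, mul_assoc, mul_comm, mul_left_comm] using hmvt

end Slices

section ProdNorm

variable {α β : Type*} [SeminormedAddCommGroup α] [SeminormedAddCommGroup β]

theorem isBigO_fst_norm (l : Filter (α × β)) : (fun p : α × β => p.1) =O[l] fun p => ‖p‖ :=
  (isBigO_fst_prod' (f' := id)).norm_right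

theorem isBigO_snd_norm (l : Filter (α × β)) : (fun p : α × β => p.2) =O[l] fun p => ‖p‖ :=
  (isBigO_snd_prod' (f' := id)).norm_right

end ProdNorm

theorem isBigO_norm_mul_norm_sq_add_sq (l : Filter (ℝ × ℝ)) :
    (fun p : ℝ × ℝ => ‖p‖ * ‖p‖) =O[l] fun p => p.1 ^ 2 + p.2 ^ 2 := by
  refine isBigO_of_le _ fun p => ?_
  rw [Real.norm_of_nonneg (by positivity), Real.norm_of_nonneg (by positivity)]
  obtain h | h := max_choice ‖p.1‖ ‖p.2‖ <;>
    rw [Prod.norm_def, h, Real.norm_eq_abs, abs_mul_abs_self] <;> nlinarith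

variable {E : Type*} [NormedAddCommGroup E] [NormedSpace ℝ E]

theorem norm_sub_le_mul_of_norm_deriv_lt_boundary {f f' : ℝ → E} {M δ : ℝ}
    (hf : ∀ t ∈ Icc 0 δ, HasDerivAt f (f' t) t)
    (hboundary : ∀ t ∈ Ico 0 δ, ‖f t - f 0‖ = M * t → ‖f' t‖ < M) :
    ∀ t ∈ Icc 0 δ, ‖f t - f 0‖ ≤ M * t :=
  image_norm_le_of_norm_deriv_right_lt_deriv_boundary' (f := fun t => f t - f 0)
    (fun t ht => ((hf t ht).continuousAt.sub continuousAt_const).continuousWithinAt)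
    (fun t ht => ((hf t (Ico_subset_Icc_self ht)).sub_const (f 0)).hasDerivWithinAt)
    (by simp) (continuous_const.mul continuous_id).continuousOn
    (fun t _ => by simpa using ((hasDerivAt_id t).const_mul M).hasDerivWithinAt) hboundary

structure IsLocalFlow (v : E → E) (Φ : ℝ → E → E) (r : ℝ) : Prop where
  pos : 0 < r
  map_zero_apply : ∀ y, Φ 0 y = y
  hasDerivAt : ∀ y t, |t| < r → HasDerivAt (fun s => Φ s y) (v (Φ t y)) t

namespace IsLocalFlow

variable {v : E → E} {Φ : ℝ → E → E} {r : ℝ} {x : E}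

theorem norm_sub_le (hΦ : IsLocalFlow v Φ r) {y : E} {M δ : ℝ} (hM : 0 ≤ M) (hδ : δ < r)
    (hv : ∀ z ∈ closedBall y (M * δ), ‖v z‖ < M) {t : ℝ} (ht : |t| ≤ δ) :
    ‖Φ t y - y‖ ≤ M * |t| := by
  have hσ : ∀ σ : ℝ, |σ| = 1 → ∀ s ∈ Icc 0 δ, ‖Φ (σ * s) y - y‖ ≤ M * s := by
    intro σ hσ
    have hsr : ∀ s ∈ Icc 0 δ, |σ * s| < r := fun s hs => by
      rw [abs_mul, hσ, one_mul, abs_of_nonneg hs.1]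
      exact hs.2.trans_lt hδ
    simpa [hΦ.map_zero_apply] using norm_sub_le_mul_of_norm_deriv_lt_boundary
      (f := fun s => Φ (σ * s) y) (f' := fun s => σ • v (Φ (σ * s) y))
      (fun s hs => by
        simpa [Function.comp_def] using
          (hΦ.hasDerivAt y _ (hsr s hs)).scomp s ((hasDerivAt_id s).const_mul σ))
      (fun s hs hboundary => by
        rw [norm_smul, Real.norm_eq_abs, hσ, one_mul]
        refine hv _ (mem_closedBall_iff_norm.2 ?_)
        simp only [mul_zero, hΦ.map_zero_apply] at hboundary
        rw [hboundary]
        exact mul_le_mul_of_nonneg_left hs.2.le hM)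
  rcases le_or_gt 0 t with h | h
  · simpa [abs_of_nonneg h] using hσ 1 (by simp) |t| ⟨abs_nonneg t, ht⟩
  · simpa [abs_of_neg h] using hσ (-1) (by simp) |t| ⟨abs_nonneg t, ht⟩

theorem isBigO_sub (hΦ : IsLocalFlow v Φ r) (hv : ContinuousAt v x) :
    (fun p : E × ℝ => Φ p.2 (x + p.1) - (x + p.1)) =O[𝓝 0] fun p => p.2 := by
  set M := ‖v x‖ + 1
  have hM : 0 < M := by positivity
  obtain ⟨ρ, hρ, hvρ⟩ :=
    Metric.eventually_nhds_iff.1 (hv.norm.eventually_lt_const (lt_add_one ‖v x‖))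
  set δ := min (ρ / (2 * M)) (r / 2)
  have hδ : 0 < δ := lt_min (by positivity) (half_pos hΦ.pos)
  have hMδ : M * δ ≤ ρ / 2 := by
    calc M * δ ≤ M * (ρ / (2 * M)) := mul_le_mul_of_nonneg_left (min_le_left _ _) hM.le
      _ = ρ / 2 := by field_simp
  refine IsBigO.of_bound M ?_
  filter_upwards [ball_mem_nhds (0 : E × ℝ) (lt_min (half_pos hρ) hδ)] with p hp
  have hp := mem_ball_zero_iff.1 hp
  have hp₁ : ‖p.1‖ < ρ / 2 := (norm_fst_le p).trans_lt (hp.trans_le (min_le_left _ _))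
  have hp₂ : |p.2| < δ := (norm_snd_le p).trans_lt (hp.trans_le (min_le_right _ _))
  rw [Real.norm_eq_abs]
  refine hΦ.norm_sub_le hM.le ((min_le_right _ _).trans_lt (half_lt_self hΦ.pos))
    (fun z hz => hvρ ?_) hp₂.le
  rw [mem_closedBall_iff_norm] at hz
  calc dist z x = ‖(z - (x + p.1)) + p.1‖ := by rw [dist_eq_norm]; abel_nf
    _ ≤ ‖z - (x + p.1)‖ + ‖p.1‖ := norm_add_le _ _
    _ < ρ := by linarith

theorem tendsto_nhds (hΦ : IsLocalFlow v Φ r) (hv : ContinuousAt v x) :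
    Tendsto (fun p : E × ℝ => Φ p.2 (x + p.1)) (𝓝 0) (𝓝 x) := by
  have hdisp : Tendsto (fun p : E × ℝ => Φ p.2 (x + p.1) - (x + p.1)) (𝓝 0) (𝓝 0) :=
    (hΦ.isBigO_sub hv).trans_tendsto (continuous_snd.tendsto' 0 0 rfl)
  have hstart : Tendsto (fun p : E × ℝ => x + p.1) (𝓝 0) (𝓝 x) := by
    simpa using tendsto_const_nhds.add (continuous_fst.tendsto' (0 : E × ℝ) 0 rfl)
  simpa using hdisp.add hstart

theorem eventually_abs_lt (hΦ : IsLocalFlow v Φ r) : ∀ᶠ p : E × ℝ in 𝓝 0, |p.2| < r :=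
  (continuous_snd.norm.tendsto' (0 : E × ℝ) 0 (by simp)).eventually_lt_const hΦ.pos

theorem isLittleO_sub_sub_smul (hΦ : IsLocalFlow v Φ r) (hv : ContinuousAt v x) :
    (fun p : E × ℝ => Φ p.2 (x + p.1) - (x + p.1) - p.2 • v x) =o[𝓝 0] fun p => p.2 := by
  have hderiv : ∀ᶠ p : E × ℝ in 𝓝 0, HasDerivAt (fun s => Φ s (x + p.1) - s • v x)
      (v (Φ p.2 (x + p.1)) - v x) p.2 := by
    filter_upwards [hΦ.eventually_abs_lt] with p hp
    simpa using (hΦ.hasDerivAt _ _ hp).fun_sub ((hasDerivAt_id p.2).smul_const (v x))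
  have hvel : (fun p : E × ℝ => v (Φ p.2 (x + p.1)) - v x) =o[𝓝 0] fun p => ‖p‖ ^ 0 := by
    simpa [isLittleO_one_iff] using (hv.tendsto.comp (hΦ.tendsto_nhds hv)).sub_const (v x)
  simpa [hΦ.map_zero_apply, sub_right_comm] using isLittleO_sub_of_hasDerivAt
    (f := fun p => Φ p.2 (x + p.1) - p.2 • v x) 0 hderiv hvel

theorem isLittleO_velocity_sub (hΦ : IsLocalFlow v Φ r) {L : E →L[ℝ] E}
    (hv : HasFDerivAt v L x) :
    (fun p : E × ℝ => v (Φ p.2 (x + p.1)) - v x - L p.1 - p.2 • L (v x)) =o[𝓝 0]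
      fun p => ‖p‖ := by
  have hdisp : (fun p : E × ℝ => Φ p.2 (x + p.1) - x) =O[𝓝 0] fun p => ‖p‖ :=
    ((hΦ.isBigO_sub hv.continuousAt).trans (isBigO_snd_norm _)).add (isBigO_fst_norm _)
      |>.congr_left fun p => by abel
  have hlin := (hv.isLittleO.comp_tendsto (hΦ.tendsto_nhds hv.continuousAt)).trans_isBigO hdisp
  have hquad := (L.isBigO_comp _ _).trans_isLittleO (hΦ.isLittleO_sub_sub_smul hv.continuousAt)
  refine (hlin.add (hquad.trans_isBigO (isBigO_snd_norm _))).congr_left fun p => ?_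
  simp only [Function.comp_apply, map_sub, map_add, map_smul]
  abel

theorem isLittleO_second_order (hΦ : IsLocalFlow v Φ r) {L : E →L[ℝ] E}
    (hv : HasFDerivAt v L x) :
    (fun p : E × ℝ => Φ p.2 (x + p.1) - (x + p.1) - p.2 • (v x + L p.1)
        - (p.2 ^ 2 / 2) • L (v x)) =o[𝓝 0] fun p => p.2 * ‖p‖ := by
  have hderiv : ∀ᶠ p : E × ℝ in 𝓝 0,
      HasDerivAt (fun s => Φ s (x + p.1) - s • (v x + L p.1) - (s ^ 2 / 2) • L (v x))
        (v (Φ p.2 (x + p.1)) - v x - L p.1 - p.2 • L (v x)) p.2 := by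
    filter_upwards [hΦ.eventually_abs_lt] with p hp
    convert ((hΦ.hasDerivAt (x + p.1) _ hp).fun_sub
      ((hasDerivAt_id' p.2).smul_const (v x + L p.1))).fun_sub
      (((hasDerivAt_pow 2 p.2).div_const 2).smul_const (L (v x))) using 1
    norm_num
    abel
  simpa [hΦ.map_zero_apply, sub_right_comm] using isLittleO_sub_of_hasDerivAt
    (f := fun p => Φ p.2 (x + p.1) - p.2 • (v x + L p.1) - (p.2 ^ 2 / 2) • L (v x)) 1 hderiv
    (by simpa using hΦ.isLittleO_velocity_sub hv)

theorem isLittleO_comp_second_order {v₁ v₂ : E → E} {Φ₁ Φ₂ : ℝ → E → E} {r₁ r₂ : ℝ}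
    {A B : E →L[ℝ] E} (hΦ₁ : IsLocalFlow v₁ Φ₁ r₁) (hΦ₂ : IsLocalFlow v₂ Φ₂ r₂)
    (hA : HasFDerivAt v₁ A x) (hB : HasFDerivAt v₂ B x) :
    (fun p : ℝ × ℝ => Φ₂ p.2 (Φ₁ p.1 x) - x - p.1 • v₁ x - p.2 • v₂ x - (p.1 * p.2) • B (v₁ x)
        - (p.1 ^ 2 / 2) • A (v₁ x) - (p.2 ^ 2 / 2) • B (v₂ x))
      =o[𝓝 0] fun p : ℝ × ℝ => p.1 ^ 2 + p.2 ^ 2 := by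
  have hfst := isBigO_fst_norm (𝓝 (0 : ℝ × ℝ))
  have hsnd := isBigO_snd_norm (𝓝 (0 : ℝ × ℝ))
  have hstart : Tendsto (fun p : ℝ × ℝ => (0, p.1)) (𝓝 0) (𝓝 (0 : E × ℝ)) :=
    (continuous_const.prodMk continuous_fst).tendsto' 0 0 rfl
  have hdisp₁ : (fun p : ℝ × ℝ => Φ₁ p.1 x - x) =O[𝓝 0] fun p => ‖p‖ := by
    simpa [Function.comp_def] using
      ((hΦ₁.isBigO_sub hA.continuousAt).comp_tendsto hstart).trans hfst
  have hnext : Tendsto (fun p : ℝ × ℝ => (Φ₁ p.1 x - x, p.2)) (𝓝 0) (𝓝 (0 : E × ℝ)) :=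
    (hdisp₁.trans_tendsto (continuous_norm.tendsto' 0 0 norm_zero)).prodMk_nhds
      (continuous_snd.tendsto' 0 0 rfl)
  have hexp₁ := ((hΦ₁.isLittleO_second_order hA).comp_tendsto hstart).trans_isBigO
    (hfst.mul (hfst.norm_left.congr_left fun p => by simp))
  have hexp₂ := ((hΦ₂.isLittleO_second_order hB).comp_tendsto hnext).trans_isBigO
    (hsnd.mul (hdisp₁.prod_left hsnd).norm_left)
  have hcross := hsnd.smul_isLittleO <| B.isBigO_comp _ _ |>.trans_isLittleO <|
    ((hΦ₁.isLittleO_sub_sub_smul hA.continuousAt).comp_tendsto hstart).trans_isBigO hfst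
  refine ((hexp₂.add hexp₁).add hcross).trans_isBigO (isBigO_norm_mul_norm_sq_add_sq _)
    |>.congr_left fun p => ?_
  simp only [Function.comp_apply, add_zero, A.map_zero, add_sub_cancel, map_sub, map_smul]
  module

end IsLocalFlow

/-- Second-order Taylor expansion of the composition of two flows:
`Φ₂(t₂, Φ₁(t₁, x)) = x + t₁·v₁(x) + t₂·v₂(x) + t₁t₂·Dv₂(x)v₁(x)
  + (t₁²/2)·Dv₁(x)v₁(x) + (t₂²/2)·Dv₂(x)v₂(x) + o(t₁² + t₂²)`
as `(t₁, t₂) → (0, 0)`, for each fixed `x`. -/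
theorem flow_composition_second_order_expansion {n : ℕ}
    (v₁ v₂ : EuclideanSpace ℝ (Fin n) → EuclideanSpace ℝ (Fin n))
    (hv₁ : ContDiff ℝ 1 v₁) (hv₂ : ContDiff ℝ 1 v₂)
    (Φ₁ Φ₂ : ℝ → EuclideanSpace ℝ (Fin n) → EuclideanSpace ℝ (Fin n))
    (hΦ₁0 : ∀ x, Φ₁ 0 x = x) (hΦ₂0 : ∀ x, Φ₂ 0 x = x)
    (hΦ₁ : ∃ r > (0 : ℝ), ∀ x, ∀ t : ℝ, |t| < r →
      HasDerivAt (fun s => Φ₁ s x) (v₁ (Φ₁ t x)) t)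
    (hΦ₂ : ∃ r > (0 : ℝ), ∀ x, ∀ t : ℝ, |t| < r →
      HasDerivAt (fun s => Φ₂ s x) (v₂ (Φ₂ t x)) t)
    (x : EuclideanSpace ℝ (Fin n)) :
    (fun p : ℝ × ℝ =>
        Φ₂ p.2 (Φ₁ p.1 x) - x - p.1 • v₁ x - p.2 • v₂ x
          - (p.1 * p.2) • (fderiv ℝ v₂ x (v₁ x))
          - (p.1 ^ 2 / 2) • (fderiv ℝ v₁ x (v₁ x))
          - (p.2 ^ 2 / 2) • (fderiv ℝ v₂ x (v₂ x)))
      =o[𝓝 0] fun p : ℝ × ℝ => p.1 ^ 2 + p.2 ^ 2 := by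
  obtain ⟨r₁, hr₁, hd₁⟩ := hΦ₁
  obtain ⟨r₂, hr₂, hd₂⟩ := hΦ₂
  exact IsLocalFlow.isLittleO_comp_second_order ⟨hr₁, hΦ₁0, hd₁⟩ ⟨hr₂, hΦ₂0, hd₂⟩
    (hv₁.differentiable one_ne_zero x).hasFDerivAt (hv₂.differentiable one_ne_zero x).hasFDerivAt
end

section
/- Let v₁, v₂ : ℝⁿ → ℝⁿ be continuously differentiable vector fields with global flows Φ₁, Φ₂ (i.e. Φₐ(0,x) = x and ∂Φₐ/∂t(t,x) = vₐ(Φₐ(t,x)) for all t ∈ ℝ and x ∈ ℝⁿ). If the flows commute, i.e. Φ₁(t₁, Φ₂(t₂, x)) = Φ₂(t₂, Φ₁(t₁, x)) for all t₁, t₂ ∈ ℝ and x ∈ ℝⁿ, then the Lie bracket vanishes identically: Dv₂(x)v₁(x) − Dv₁(x)v₂(x) = 0 for all x ∈ ℝⁿ. -/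
/-!
Put `A (s, t) = Φ₁ s (Φ₂ t x)`. Since the flows commute, `∂ₛA = v₁ ∘ A` and `∂ₜA = v₂ ∘ A`
everywhere. `A` is jointly continuous: it is continuous in `t`, and near any point its
`s`-trajectories stay in a ball on which `v₁` is bounded, so they are uniformly Lipschitz. Hence
both partial derivatives are continuous, `A` is differentiable with
`DA(p)(a, b) = a • v₁ (A p) + b • v₂ (A p)`, and differentiating once more at `0` gives
`D²A(0)((1,0),(0,1)) = Dv₂(x)v₁(x)` and `D²A(0)((0,1),(1,0)) = Dv₁(x)v₂(x)`. These agree by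
symmetry of the second derivative.
-/

open Topology Metric Set Filter ContinuousLinearMap

section

variable {E : Type*} [NormedAddCommGroup E] [NormedSpace ℝ E]

theorem dist_le_of_hasDerivAt_of_norm_lt_on_closedBall {v : E → E} {f : ℝ → E} {y₀ : E}
    {a b r M : ℝ} (hM : 0 ≤ M) (hv : ∀ y ∈ closedBall y₀ r, ‖v y‖ < M)
    (hf : ∀ s, HasDerivAt f (v (f s)) s) (hr : dist (f a) y₀ + M * (b - a) ≤ r) :
    ∀ s ∈ Icc a b, dist (f s) y₀ ≤ r := by
  let B : ℝ → ℝ := fun s => dist (f a) y₀ + M * (s - a)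
  have hB : ∀ s, HasDerivAt B M s := fun s => by
    simpa [B] using ((hasDerivAt_id s).sub_const a).const_mul M |>.const_add (dist (f a) y₀)
  have hB_le : ∀ s ∈ Icc a b, B s ≤ r := fun s hs => by
    nlinarith [mul_le_mul_of_nonneg_left (sub_le_sub_right hs.2 a) hM]
  have hfence : ∀ s ∈ Icc a b, ‖f s - y₀‖ ≤ B s :=
    image_norm_le_of_norm_deriv_right_lt_deriv_boundary
      (fun s _ => ((hf s).sub_const y₀).continuousAt.continuousWithinAt)
      (fun s _ => ((hf s).sub_const y₀).hasDerivWithinAt) (by simp [B, dist_eq_norm]) hB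
      fun s hs hsB => hv _ <| by
        rw [mem_closedBall, dist_eq_norm, hsB]; exact hB_le s (Ico_subset_Icc_self hs)
  exact fun s hs => (dist_eq_norm (f s) y₀ ▸ hfence s hs).trans (hB_le s hs)

theorem continuous_of_hasDerivAt_fst_of_continuous_snd {β : Type*} [TopologicalSpace β]
    {v : E → E} (hv : Continuous v) {A : ℝ × β → E}
    (hA₁ : ∀ p : ℝ × β, HasDerivAt (fun s => A (s, p.2)) (v (A p)) p.1)
    (hA₂ : ∀ s, Continuous fun t => A (s, t)) : Continuous A := by
  refine continuous_iff_continuousAt.2 fun ⟨s₀, t₀⟩ => ?_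
  set y₀ := A (s₀, t₀)
  set M := ‖v y₀‖ + 1
  have hM : 0 ≤ M := by positivity
  obtain ⟨r, hr, hvr⟩ : ∃ r, 0 < r ∧ ∀ y ∈ closedBall y₀ r, ‖v y‖ < M := by
    obtain ⟨ε, hε, hvε⟩ := Metric.continuousAt_iff.1 hv.continuousAt 1 one_pos
    refine ⟨ε / 2, half_pos hε, fun y hy => ?_⟩
    have := hvε (lt_of_le_of_lt (mem_closedBall.1 hy) (half_lt_self hε))
    linarith [norm_le_norm_add_norm_sub' (v y) (v y₀), dist_eq_norm (v y) (v y₀)]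
  -- start the `s`-trajectories a little before `s₀`, so that only forward estimates are needed
  obtain ⟨h, ⟨hnear, hhM⟩, hh⟩ : ∃ h : ℝ, (dist (A (s₀ - h, t₀)) y₀ < r / 4 ∧
      M * (2 * h) ≤ r / 2) ∧ 0 < h := by
    have hstart : Tendsto (fun h : ℝ => A (s₀ - h, t₀)) (𝓝[>] 0) (𝓝 y₀) := by
      have := (hA₁ (s₀, t₀)).continuousAt.tendsto.comp
        ((continuous_const.sub continuous_id).tendsto' (0 : ℝ) s₀ (sub_zero s₀))
      exact this.mono_left nhdsWithin_le_nhds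
    have hsmall : Tendsto (fun h : ℝ => M * (2 * h)) (𝓝[>] 0) (𝓝 0) := by
      have := ((continuous_const.mul (continuous_const.mul continuous_id)).tendsto' (0 : ℝ) 0
        (by simp) : Tendsto (fun h : ℝ => M * (2 * h)) (𝓝 0) (𝓝 0))
      exact this.mono_left nhdsWithin_le_nhds
    exact ((hstart.eventually (ball_mem_nhds y₀ (div_pos hr four_pos))).and
      ((hsmall.eventually (gt_mem_nhds (half_pos hr))).mono fun _ => le_of_lt)
      |>.and self_mem_nhdsWithin).exists
  set U := {t | dist (A (s₀ - h, t)) (A (s₀ - h, t₀)) < r / 4}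
  have hU : U ∈ 𝓝 t₀ :=
    (isOpen_lt ((hA₂ _).dist continuous_const) continuous_const).mem_nhds (by simpa [U] using hr)
  have hbox : ∀ t ∈ U, ∀ s ∈ Icc (s₀ - h) (s₀ + h), A (s, t) ∈ closedBall y₀ r := fun t ht =>
    dist_le_of_hasDerivAt_of_norm_lt_on_closedBall hM hvr (fun s => hA₁ (s, t)) <| by
      linarith [dist_triangle (A (s₀ - h, t)) (A (s₀ - h, t₀)) y₀, ht.out]
  have hlip : ∀ t ∈ U, LipschitzOnWith M.toNNReal (fun s => A (s, t)) (Icc (s₀ - h) (s₀ + h)) :=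
    fun t ht => (convex_Icc _ _).lipschitzOnWith_of_nnnorm_hasDerivWithin_le
      (fun s _ => (hA₁ (s, t)).hasDerivWithinAt) fun s hs => by
        simpa [← NNReal.coe_le_coe, hM] using (hvr _ (hbox t ht s hs)).le
  exact (continuousOn_prod_of_continuousOn_lipschitzOnWith A M.toNNReal
    (fun s _ => (hA₂ s).continuousOn) hlip).continuousAt
    (prod_mem_nhds (Icc_mem_nhds (by linarith) (by linarith)) hU)

theorem hasStrictFDerivAt_of_hasDerivAt_partial {A : ℝ × ℝ → E} {w₁ w₂ : ℝ × ℝ → E}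
    (hA₁ : ∀ p : ℝ × ℝ, HasDerivAt (fun s => A (s, p.2)) (w₁ p) p.1)
    (hA₂ : ∀ p : ℝ × ℝ, HasDerivAt (fun t => A (p.1, t)) (w₂ p) p.2)
    (hw₁ : Continuous w₁) (hw₂ : Continuous w₂) (p : ℝ × ℝ) :
    HasStrictFDerivAt A ((toSpanSingleton ℝ (w₁ p)).coprod (toSpanSingleton ℝ (w₂ p))) p :=
  hasStrictFDerivAt_uncurry_coprod (f := fun s t => A (s, t))
    (f₁ := fun s t => toSpanSingleton ℝ (w₁ (s, t)))
    (f₂ := fun s t => toSpanSingleton ℝ (w₂ (s, t)))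
    (.of_forall hA₁) (.of_forall hA₂) (toSpanSingletonCLE.continuous.comp hw₁).continuousAt
    (toSpanSingletonCLE.continuous.comp hw₂).continuousAt

theorem fderiv_apply_comm_of_hasFDerivAt_coprod {A : ℝ × ℝ → E} {v₁ v₂ : E → E}
    (hA : ∀ p, HasFDerivAt A
      ((toSpanSingleton ℝ (v₁ (A p))).coprod (toSpanSingleton ℝ (v₂ (A p)))) p)
    {p₀ : ℝ × ℝ} (hv₁ : DifferentiableAt ℝ v₁ (A p₀)) (hv₂ : DifferentiableAt ℝ v₂ (A p₀)) :
    fderiv ℝ v₂ (A p₀) (v₁ (A p₀)) = fderiv ℝ v₁ (A p₀) (v₂ (A p₀)) := by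
  let Ψ : E × E →L[ℝ] (ℝ × ℝ →L[ℝ] E) := (coprodEquivL ℝ : _ ≃L[ℝ] _).toContinuousLinearMap ∘L
    (toSpanSingletonCLE.toContinuousLinearMap.prodMap toSpanSingletonCLE.toContinuousLinearMap)
  have hA' : ∀ p, HasFDerivAt A (Ψ (v₁ (A p), v₂ (A p))) p := hA
  have hL := Ψ.hasFDerivAt.comp p₀
    ((hv₁.hasFDerivAt.comp p₀ (hA' p₀)).prodMk (hv₂.hasFDerivAt.comp p₀ (hA' p₀)))
  simpa [Ψ] using second_derivative_symmetric hA' hL (1, 0) (0, 1)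

end

/-- If the global flows of two C¹ vector fields commute, then their Lie bracket
`Dv₂(x)v₁(x) − Dv₁(x)v₂(x)` vanishes identically. -/
theorem lie_bracket_vanishes_of_commuting_flows {n : ℕ}
    (v₁ v₂ : EuclideanSpace ℝ (Fin n) → EuclideanSpace ℝ (Fin n))
    (hv₁ : ContDiff ℝ 1 v₁) (hv₂ : ContDiff ℝ 1 v₂)
    (Φ₁ Φ₂ : ℝ → EuclideanSpace ℝ (Fin n) → EuclideanSpace ℝ (Fin n))
    (hΦ₁0 : ∀ x, Φ₁ 0 x = x) (hΦ₂0 : ∀ x, Φ₂ 0 x = x)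
    (hΦ₁ : ∀ x, ∀ t : ℝ, HasDerivAt (fun s => Φ₁ s x) (v₁ (Φ₁ t x)) t)
    (hΦ₂ : ∀ x, ∀ t : ℝ, HasDerivAt (fun s => Φ₂ s x) (v₂ (Φ₂ t x)) t)
    (hcomm : ∀ t₁ t₂ : ℝ, ∀ x, Φ₁ t₁ (Φ₂ t₂ x) = Φ₂ t₂ (Φ₁ t₁ x)) :
    ∀ x, fderiv ℝ v₂ x (v₁ x) - fderiv ℝ v₁ x (v₂ x) = 0 := by
  intro x
  set A : ℝ × ℝ → EuclideanSpace ℝ (Fin n) := fun p => Φ₁ p.1 (Φ₂ p.2 x)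
  have hA₁ : ∀ p : ℝ × ℝ, HasDerivAt (fun s => A (s, p.2)) (v₁ (A p)) p.1 :=
    fun p => hΦ₁ (Φ₂ p.2 x) p.1
  have hA₂ : ∀ p : ℝ × ℝ, HasDerivAt (fun t => A (p.1, t)) (v₂ (A p)) p.2 := fun p => by
    simpa only [A, hcomm] using hΦ₂ (Φ₁ p.1 x) p.2
  have hA_cont : Continuous A := continuous_of_hasDerivAt_fst_of_continuous_snd hv₁.continuous
    hA₁ fun s => continuous_iff_continuousAt.2 fun t => (hA₂ (s, t)).continuousAt
  have hA : ∀ p, HasFDerivAt A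
      ((toSpanSingleton ℝ (v₁ (A p))).coprod (toSpanSingleton ℝ (v₂ (A p)))) p := fun p =>
    (hasStrictFDerivAt_of_hasDerivAt_partial hA₁ hA₂ (hv₁.continuous.comp hA_cont)
      (hv₂.continuous.comp hA_cont) p).hasFDerivAt
  have hA0 : A 0 = x := by simp [A, hΦ₁0, hΦ₂0]
  have hsymm := fderiv_apply_comm_of_hasFDerivAt_coprod hA
    (hv₁.differentiable one_ne_zero (A 0)) (hv₂.differentiable one_ne_zero (A 0))
  rw [hA0] at hsymm
  rw [hsymm, sub_self]
end

section
/- Let u₁, u₂ : ℝⁿ → ℝⁿ be continuously differentiable vector fields and L : ℝⁿ → ℝ continuously differentiable. Let Φ₁, Φ₂, Φ̄ be flows of u₁, u₂ and of the averaged field (u₁+u₂)/2 respectively (i.e. each Φ satisfies Φ(0,x) = x and ∂Φ/∂t(t,x) equal to the respective field evaluated at Φ(t,x), for t near 0). Then for each fixed x, as ε → 0⁺, L(Φ₂(ε, Φ₁(ε, x))) − L(Φ̄(2ε, x)) = (ε²/2)·⟨Du₂(x)u₁(x) − Du₁(x)u₂(x), ∇L(x)⟩ + o(ε²). -/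
/-!
Along a trajectory of a `C¹` field `u`, the velocity `u(Φ(t,y))` has derivative `Du·u` at
`Φ(t,y)`, so `Φ(t,y) = y + t u(y) + (t²/2) Du(y)u(y) + o(t²)`, uniformly for `y` near `x`
(the trajectories stay in a ball on which `u` and `Du·u` are controlled by continuity at `x`).
The uniformity lets us expand `Φ₂(ε, ·)` at the moving point `y = Φ₁(ε, x)`; expanding `u₂(y)`
and `Du₂(y)u₂(y)` once more about `x`, the first-order terms of both schedules agree and the
second-order terms differ by `(ε²/2)(Du₂ u₁ − Du₁ u₂)(x)`. As the two endpoints are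
`O(ε²)`-close and both tend to `x`, strict differentiability of `L` at `x` turns this into the
claimed expansion of the loss difference.
-/

open Asymptotics Topology Filter Set Metric
open scoped RealInnerProductSpace

section LocalFlow

variable {E : Type*} [NormedAddCommGroup E] [NormedSpace ℝ E] {u : E → E} {Φ : ℝ → E → E}

/-- The time bound `r` is uniform in the starting point; no group law is required. -/
def IsLocalFlow_s5 (u : E → E) (Φ : ℝ → E → E) : Prop :=
  (∀ y, Φ 0 y = y) ∧
    ∃ r > (0 : ℝ), ∀ y, ∀ t : ℝ, |t| < r → HasDerivAt (fun s => Φ s y) (u (Φ t y)) t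

theorem IsLocalFlow_s5.hasDerivAt_zero (hΦ : IsLocalFlow_s5 u Φ) (x : E) :
    HasDerivAt (fun t => Φ t x) (u x) 0 := by
  obtain ⟨hΦ0, r, hr, hΦ⟩ := hΦ
  simpa [hΦ0] using hΦ x 0 (by simpa using hr)

theorem IsLocalFlow_s5.tendsto_nhds_zero (hΦ : IsLocalFlow_s5 u Φ) (x : E) :
    Tendsto (fun t => Φ t x) (𝓝 0) (𝓝 x) := by
  simpa [hΦ.1] using (hΦ.hasDerivAt_zero x).continuousAt.tendsto

theorem norm_sub_le_of_hasDerivAt_of_norm_lt {f : ℝ → E} {T K : ℝ} (hK : 0 ≤ K)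
    (hf : ∀ t ∈ Icc 0 T, HasDerivAt f (u (f t)) t)
    (hu : ∀ z ∈ closedBall (f 0) (K * T), ‖u z‖ < K) :
    ∀ t ∈ Icc 0 T, ‖f t - f 0‖ ≤ K * t := by
  have hf' (t) (ht : t ∈ Icc 0 T) : HasDerivAt (fun s => f s - f 0) (u (f t)) t :=
    (hf t ht).sub_const _
  refine image_norm_le_of_norm_deriv_right_lt_deriv_boundary'
    (fun t ht => (hf' t ht).continuousAt.continuousWithinAt)
    (fun t ht => (hf' t (Ico_subset_Icc_self ht)).hasDerivWithinAt) (by simp)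
    (continuous_const.mul continuous_id).continuousOn
    (fun t _ => ((hasDerivAt_id t).const_mul K).hasDerivWithinAt.congr_deriv (mul_one _))
    fun t ht hft => hu _ (mem_closedBall_iff_norm.2 ?_)
  rw [hft]
  exact mul_le_mul_of_nonneg_left ht.2.le hK

theorem norm_sub_taylor_two_le_of_hasDerivAt (hu : Differentiable ℝ u) {f : ℝ → E} {T δ : ℝ}
    (hT : 0 ≤ T) (hf : ∀ t ∈ Icc 0 T, HasDerivAt f (u (f t)) t)
    (hδ : ∀ t ∈ Icc 0 T,
      ‖fderiv ℝ u (f t) (u (f t)) - fderiv ℝ u (f 0) (u (f 0))‖ ≤ δ) :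
    ‖f T - f 0 - T • u (f 0) - (T ^ 2 / 2) • fderiv ℝ u (f 0) (u (f 0))‖ ≤ δ * T ^ 2 := by
  set w := fderiv ℝ u (f 0) (u (f 0))
  have hδ0 : 0 ≤ δ := (norm_nonneg _).trans (hδ 0 ⟨le_rfl, hT⟩)
  have hvel (s) (hs : s ∈ Icc 0 T) : HasDerivAt (fun s => u (f s) - u (f 0) - s • w)
      (fderiv ℝ u (f s) (u (f s)) - w) s := by
    simpa using (((hu (f s)).hasFDerivAt.comp_hasDerivAt s (hf s hs)).sub_const (u (f 0))).fun_sub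
      ((hasDerivAt_id s).smul_const w)
  have hvel_le (s) (hs : s ∈ Icc 0 T) : ‖u (f s) - u (f 0) - s • w‖ ≤ δ * s := by
    simpa using norm_image_sub_le_of_norm_deriv_le_segment'
      (fun s hs => (hvel s hs).hasDerivWithinAt) (fun s hs => hδ s (Ico_subset_Icc_self hs)) s hs
  have hpos (s) (hs : s ∈ Icc 0 T) : HasDerivAt
      (fun s => f s - f 0 - s • u (f 0) - (s ^ 2 / 2) • w) (u (f s) - u (f 0) - s • w) s := by
    have hsq : HasDerivAt (fun s : ℝ => s ^ 2 / 2) s s := by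
      simpa using (hasDerivAt_pow 2 s).div_const 2
    simpa using (((hf s hs).sub_const (f 0)).fun_sub
      ((hasDerivAt_id s).smul_const (u (f 0)))).fun_sub (hsq.smul_const w)
  have := norm_image_sub_le_of_norm_deriv_le_segment' (C := δ * T)
    (fun s hs => (hpos s hs).hasDerivWithinAt)
    (fun s hs => (hvel_le s (Ico_subset_Icc_self hs)).trans
      (mul_le_mul_of_nonneg_left hs.2.le hδ0)) T ⟨hT, le_rfl⟩
  simpa [sq, mul_assoc] using this

theorem IsLocalFlow_s5.sub_taylor_two_isLittleO (hΦ : IsLocalFlow_s5 u Φ) (hu : ContDiff ℝ 1 u)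
    (x : E) :
    (fun p : ℝ × E => Φ p.1 p.2 - p.2 - p.1 • u p.2 - (p.1 ^ 2 / 2) • fderiv ℝ u p.2 (u p.2))
      =o[𝓝[≥] 0 ×ˢ 𝓝 x] fun p => p.1 ^ 2 := by
  obtain ⟨hΦ0, r, hr, hΦ⟩ := hΦ
  have hud : Differentiable ℝ u := hu.differentiable one_ne_zero
  have hF : Continuous fun z => fderiv ℝ u z (u z) :=
    (hu.continuous_fderiv one_ne_zero).clm_apply hud.continuous
  refine isLittleO_iff.2 fun δ hδ => ?_
  obtain ⟨ηF, hηF, hFη⟩ := Metric.continuousAt_iff.1 hF.continuousAt (δ / 2) (half_pos hδ)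
  obtain ⟨ηu, hηu, huη⟩ := Metric.continuousAt_iff.1 hud.continuous.continuousAt 1 one_pos
  set ρ := min ηF ηu / 2 with hρ_def
  set K := ‖u x‖ + 1
  have hρ : 0 < ρ := by positivity
  have hnear (y) (hy : y ∈ ball x ρ) (z) (hz : z ∈ closedBall y ρ) :
      dist (fderiv ℝ u z (u z)) (fderiv ℝ u x (u x)) < δ / 2 ∧ ‖u z‖ < K := by
    have hzx : dist z x < min ηF ηu := by
      linarith [dist_triangle z y x, mem_closedBall.1 hz, mem_ball.1 hy, hρ_def]
    refine ⟨hFη (hzx.trans_le (min_le_left _ _)), ?_⟩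
    have := huη (hzx.trans_le (min_le_right _ _))
    rw [dist_eq_norm] at this
    linarith [norm_le_insert' (u z) (u x)]
  have hT : 0 < min r (ρ / K) := lt_min hr (by positivity)
  filter_upwards [prod_mem_prod (Ico_mem_nhdsGE hT) (ball_mem_nhds x hρ)]
    with ⟨t, y⟩ ⟨ht, hy⟩
  dsimp only at ht hy ⊢
  set f := fun s => Φ s y
  have hf0 : f 0 = y := hΦ0 y
  have hf : ∀ s ∈ Icc 0 t, HasDerivAt f (u (f s)) s := fun s hs =>
    hΦ y s (by rw [abs_of_nonneg hs.1]; exact hs.2.trans_lt (ht.2.trans_le (min_le_left _ _)))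
  have hKt : K * t ≤ ρ := by
    have := (lt_min_iff.1 ht.2).2
    rw [lt_div_iff₀ (by positivity)] at this
    linarith
  have hstay : ∀ s ∈ Icc 0 t, f s ∈ closedBall y ρ := fun s hs => by
    rw [mem_closedBall_iff_norm, ← hf0]
    refine (norm_sub_le_of_hasDerivAt_of_norm_lt (K := K) (by positivity) hf
      (fun z hz => ?_) s hs).trans ?_
    · rw [hf0] at hz
      exact (hnear y hy z (closedBall_subset_closedBall hKt hz)).2
    · exact (mul_le_mul_of_nonneg_left hs.2 (by positivity)).trans hKt
  have := norm_sub_taylor_two_le_of_hasDerivAt (δ := δ) hud ht.1 hf fun s hs => by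
    rw [← dist_eq_norm, hf0]
    linarith [dist_triangle_right (fderiv ℝ u (f s) (u (f s))) (fderiv ℝ u y (u y))
      (fderiv ℝ u x (u x)), (hnear y hy _ (hstay s hs)).1,
      (hnear y hy y (mem_closedBall_self hρ.le)).1]
  rw [hf0] at this
  simpa [Real.norm_of_nonneg (sq_nonneg t)] using this

theorem IsLocalFlow_s5.sub_taylor_two_isLittleO_comp (hΦ : IsLocalFlow_s5 u Φ) (hu : ContDiff ℝ 1 u)
    {x : E} {c : ℝ} (hc : 0 ≤ c) {y : ℝ → E} (hy : Tendsto y (𝓝[>] 0) (𝓝 x)) :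
    (fun ε => Φ (c * ε) (y ε) - y ε - (c * ε) • u (y ε)
        - ((c * ε) ^ 2 / 2) • fderiv ℝ u (y ε) (u (y ε))) =o[𝓝[>] 0] fun ε => ε ^ 2 := by
  have hcε : Tendsto (fun ε => c * ε) (𝓝[>] 0) (𝓝[≥] 0) := by
    refine tendsto_nhdsWithin_iff.2 ⟨?_, eventually_nhdsWithin_of_forall fun ε hε =>
      mul_nonneg hc (le_of_lt hε)⟩
    simpa using ((continuous_const_mul c).tendsto 0).mono_left nhdsWithin_le_nhds
  refine ((hΦ.sub_taylor_two_isLittleO hu x).comp_tendsto (hcε.prodMk hy)).trans_isBigO ?_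
  simpa [Function.comp_def, mul_pow] using
    (isBigO_refl (fun ε : ℝ => ε ^ 2) _).const_mul_left (c ^ 2)

theorem flow_comp_flow_sub_flow_average_isLittleO {u₁ u₂ : E → E} (hu₁ : ContDiff ℝ 1 u₁)
    (hu₂ : ContDiff ℝ 1 u₂) {Φ₁ Φ₂ Φavg : ℝ → E → E} (hΦ₁ : IsLocalFlow_s5 u₁ Φ₁)
    (hΦ₂ : IsLocalFlow_s5 u₂ Φ₂) (hΦavg : IsLocalFlow_s5 (fun z => (2⁻¹ : ℝ) • (u₁ z + u₂ z)) Φavg)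
    (x : E) :
    (fun ε => Φ₂ ε (Φ₁ ε x) - Φavg (2 * ε) x
        - (ε ^ 2 / 2) • (fderiv ℝ u₂ x (u₁ x) - fderiv ℝ u₁ x (u₂ x)))
      =o[𝓝[>] 0] fun ε => ε ^ 2 := by
  have hd₁ : Differentiable ℝ u₁ := hu₁.differentiable one_ne_zero
  have hd₂ : Differentiable ℝ u₂ := hu₂.differentiable one_ne_zero
  set y := fun ε => Φ₁ ε x
  have hy0 : y 0 = x := hΦ₁.1 x
  have hy : HasDerivAt y (u₁ x) 0 := hΦ₁.hasDerivAt_zero x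
  have hyx : Tendsto y (𝓝[>] 0) (𝓝 x) := (hΦ₁.tendsto_nhds_zero x).mono_left nhdsWithin_le_nhds
  have R₁ := hΦ₁.sub_taylor_two_isLittleO_comp hu₁ zero_le_one (tendsto_const_nhds (x := x))
  have R₂ := hΦ₂.sub_taylor_two_isLittleO_comp hu₂ zero_le_one hyx
  have Ravg := hΦavg.sub_taylor_two_isLittleO_comp ((hu₁.add hu₂).const_smul (2⁻¹ : ℝ))
    zero_le_two (tendsto_const_nhds (x := x))
  have hu₂y : (fun ε => ε • (u₂ (y ε) - u₂ x - ε • fderiv ℝ u₂ x (u₁ x)))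
      =o[𝓝[>] 0] fun ε => ε ^ 2 := by
    have := ((hd₂ (y 0)).hasFDerivAt.comp_hasDerivAt 0 hy).isLittleO.mono
      (nhdsWithin_le_nhds (s := Ioi 0))
    simpa [hy0, sq] using (isBigO_refl (fun ε : ℝ => ε) _).smul_isLittleO this
  have hF₂y : (fun ε => (ε ^ 2 / 2) •
      (fderiv ℝ u₂ (y ε) (u₂ (y ε)) - fderiv ℝ u₂ x (u₂ x))) =o[𝓝[>] 0] fun ε => ε ^ 2 := by
    have hF₂ : Continuous fun z => fderiv ℝ u₂ z (u₂ z) :=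
      (hu₂.continuous_fderiv one_ne_zero).clm_apply hd₂.continuous
    have := (isLittleO_one_iff ℝ).2 (tendsto_sub_nhds_zero_iff.2 ((hF₂.tendsto x).comp hyx))
    simpa [div_eq_inv_mul] using
      ((isBigO_refl (fun ε : ℝ => ε ^ 2) _).const_mul_left 2⁻¹).smul_isLittleO this
  have hDavg : fderiv ℝ (fun z => (2⁻¹ : ℝ) • (u₁ z + u₂ z)) x
      = (2⁻¹ : ℝ) • (fderiv ℝ u₁ x + fderiv ℝ u₂ x) :=
    (((hd₁ x).hasFDerivAt.add (hd₂ x).hasFDerivAt).const_smul (2⁻¹ : ℝ)).fderiv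
  refine ((((R₂.add R₁).sub Ravg).add hu₂y).add hF₂y).congr_left fun ε => ?_
  simp only [hDavg, one_mul, smul_apply, add_apply, map_smul, map_add]
  module

theorem HasStrictFDerivAt.isLittleO_sub_sub_of_isLittleO {F : Type*} [NormedAddCommGroup F]
    [NormedSpace ℝ F] {f : E → F} {f' : E →L[ℝ] F} {x : E} (hf : HasStrictFDerivAt f f' x)
    {α : Type*} {l : Filter α} {z a w : α → E} {g : α → ℝ} (ha : Tendsto a l (𝓝 x))
    (hg : Tendsto g l (𝓝 0)) (hw : w =O[l] g) (h : (fun t => z t - a t - w t) =o[l] g) :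
    (fun t => f (z t) - f (a t) - f' (w t)) =o[l] g := by
  have hza : (fun t => z t - a t) =O[l] g :=
    (h.isBigO.add hw).congr_left fun t => sub_add_cancel _ _
  have hz : Tendsto z l (𝓝 x) := by
    simpa using (hza.trans_tendsto hg).add ha
  refine (((hf.isLittleO.comp_tendsto (hz.prodMk_nhds ha)).trans_isBigO hza).add
    ((f'.isBigO_comp _ l).trans_isLittleO h)).congr_left fun t => ?_
  simp only [Function.comp_apply, map_sub]
  abel

end LocalFlow

/-- Training for time `ε` on field `u₁` followed by time `ε` on field `u₂`,
compared against training for time `2ε` on the averaged field `(u₁+u₂)/2`: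
`L(Φ₂(ε, Φ₁(ε, x))) − L(Φ̄(2ε, x))
  = (ε²/2)·⟨Du₂(x)u₁(x) − Du₁(x)u₂(x), ∇L(x)⟩ + o(ε²)` as `ε → 0⁺`. -/
theorem ordering_excess_loss {n : ℕ}
    (u₁ u₂ : EuclideanSpace ℝ (Fin n) → EuclideanSpace ℝ (Fin n))
    (hu₁ : ContDiff ℝ 1 u₁) (hu₂ : ContDiff ℝ 1 u₂)
    (L : EuclideanSpace ℝ (Fin n) → ℝ) (hL : ContDiff ℝ 1 L)
    (Φ₁ Φ₂ Φavg : ℝ → EuclideanSpace ℝ (Fin n) → EuclideanSpace ℝ (Fin n))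
    (hΦ₁0 : ∀ x, Φ₁ 0 x = x) (hΦ₂0 : ∀ x, Φ₂ 0 x = x)
    (hΦavg0 : ∀ x, Φavg 0 x = x)
    (hΦ₁ : ∃ r > (0 : ℝ), ∀ x, ∀ t : ℝ, |t| < r →
      HasDerivAt (fun s => Φ₁ s x) (u₁ (Φ₁ t x)) t)
    (hΦ₂ : ∃ r > (0 : ℝ), ∀ x, ∀ t : ℝ, |t| < r →
      HasDerivAt (fun s => Φ₂ s x) (u₂ (Φ₂ t x)) t)
    (hΦavg : ∃ r > (0 : ℝ), ∀ x, ∀ t : ℝ, |t| < r →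
      HasDerivAt (fun s => Φavg s x) ((2⁻¹ : ℝ) • (u₁ (Φavg t x) + u₂ (Φavg t x))) t)
    (x : EuclideanSpace ℝ (Fin n)) :
    (fun ε : ℝ =>
        L (Φ₂ ε (Φ₁ ε x)) - L (Φavg (2 * ε) x)
          - (ε ^ 2 / 2) *
              ⟪fderiv ℝ u₂ x (u₁ x) - fderiv ℝ u₁ x (u₂ x), gradient L x⟫)
      =o[𝓝[>] 0] fun ε : ℝ => ε ^ 2 := by
  set w := fderiv ℝ u₂ x (u₁ x) - fderiv ℝ u₁ x (u₂ x)
  have hΦavg' : IsLocalFlow_s5 (fun z => (2⁻¹ : ℝ) • (u₁ z + u₂ z)) Φavg := ⟨hΦavg0, hΦavg⟩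
  have hflows :=
    flow_comp_flow_sub_flow_average_isLittleO hu₁ hu₂ ⟨hΦ₁0, hΦ₁⟩ ⟨hΦ₂0, hΦ₂⟩ hΦavg' x
  have h2ε : Tendsto (fun ε : ℝ => 2 * ε) (𝓝[>] 0) (𝓝 0) := by
    simpa using ((continuous_const_mul (2 : ℝ)).tendsto 0).mono_left nhdsWithin_le_nhds
  have hsq : Tendsto (fun ε : ℝ => ε ^ 2) (𝓝[>] 0) (𝓝 0) := by
    simpa using ((continuous_pow 2).tendsto (0 : ℝ)).mono_left nhdsWithin_le_nhds
  have hw : (fun ε : ℝ => (ε ^ 2 / 2) • w) =O[𝓝[>] 0] fun ε => ε ^ 2 := by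
    simpa [div_eq_inv_mul] using ((isBigO_refl (fun ε : ℝ => ε ^ 2) _).const_mul_left 2⁻¹).smul
      (isBigO_const_const w (one_ne_zero (α := ℝ)) (𝓝[>] 0))
  refine ((hL.contDiffAt.hasStrictFDerivAt one_ne_zero).isLittleO_sub_sub_of_isLittleO
    ((hΦavg'.tendsto_nhds_zero x).comp h2ε) hsq hw hflows).congr_left fun ε => ?_
  rw [map_smul, smul_eq_mul, real_inner_comm, gradient, InnerProductSpace.toDual_symm_apply]
  rfl
end

section
/- Let L₁, …, L_K : ℝⁿ → ℝ be twice continuously differentiable, let w₁, …, w_K : ℝ → ℝ be bounded, nonnegative, right-continuous functions, and let θ : [t₀, t₀+T] → ℝⁿ be differentiable with θ'(t) = −Σ_k w_k(t)·∇L_k(θ(t)) for all t ∈ [t₀, t₀+T]. Then as τ → 0⁺, θ(t₀+τ) = θ(t₀) − Σ_k (∫_{t₀}^{t₀+τ} w_k(s) ds)·∇L_k(θ(t₀)) + Σ_{k₁,k₂} (∫_{t₀}^{t₀+τ} ∫_{t₀}^{s} w_{k₁}(s)·w_{k₂}(r) dr ds)·Hess L_{k₁}(θ(t₀))·∇L_{k₂}(θ(t₀))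 + o(τ²). -/
/-!
Integrating the flow, `θ t - θ t₀ = -∫_{t₀}^t Σₖ wₖ(s) gₖ(θ s) ds` with `gₖ = ∇Lₖ`. Subtracting the
claimed expansion, the remainder becomes the integral of
`Σₖ wₖ(s) (gₖ(θ t₀) - gₖ(θ s) - Dgₖ(θ t₀)[Σⱼ Wⱼ(s) gⱼ(θ t₀)])`, where `Wⱼ` are the primitives of the
weights. Split `gₖ(θ s) - gₖ(θ t₀)` into `Dgₖ(θ t₀)[θ s - θ t₀]` plus a Taylor remainder
`o(‖θ s - θ t₀‖) = o(s - t₀)`; what is left is `Dgₖ(θ t₀)` applied to the first-order remainder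
`θ s - θ t₀ + Σⱼ Wⱼ(s) gⱼ(θ t₀)`, which the same argument one order lower shows to be `o(s - t₀)`.
With bounded weights the integrand is thus `o(s - t₀)`, and its integral `o((t - t₀)²)`.
-/

open Asymptotics Filter Topology MeasureTheory Set

theorem measurable_of_continuousWithinAt_Ici {β : Type*} [TopologicalSpace β]
    [TopologicalSpace.PseudoMetrizableSpace β] [MeasurableSpace β] [BorelSpace β] {f : ℝ → β}
    (hf : ∀ t, ContinuousWithinAt f (Ici t) t) : Measurable f := by
  -- `f` is the pointwise limit of its samples at the right end points of finer and finer grids.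
  set grid : ℕ → ℝ → ℝ := fun m t => ⌈(m + 1 : ℝ) * t⌉ / (m + 1 : ℝ)
  refine measurable_of_tendsto_metrizable (f := fun m t => f (grid m t)) (fun m => ?_) ?_
  · exact (Measurable.of_discrete (f := fun z : ℤ => f (z / (m + 1 : ℝ)))).comp
      (Int.measurable_ceil.comp (measurable_const_mul _))
  refine tendsto_pi_nhds.2 fun t => (hf t).tendsto.comp ?_
  have hgrid : ∀ m : ℕ, t ≤ grid m t ∧ grid m t ≤ t + 1 / (m + 1) := fun m => by
    have hm : (0 : ℝ) < m + 1 := by positivity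
    constructor
    · rw [le_div_iff₀ hm, mul_comm]
      exact Int.le_ceil _
    · have hmul : (t + 1 / (m + 1)) * (m + 1) = (m + 1) * t + 1 := by field_simp
      rw [div_le_iff₀ hm, hmul]
      exact (Int.ceil_lt_add_one _).le
  refine tendsto_nhdsWithin_iff.2 ⟨?_, Eventually.of_forall fun m => (hgrid m).1⟩
  refine tendsto_of_tendsto_of_tendsto_of_le_of_le tendsto_const_nhds ?_
    (fun m => (hgrid m).1) (fun m => (hgrid m).2)
  simpa using (tendsto_const_nhds (x := t)).add tendsto_one_div_add_atTop_nhds_zero_nat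

theorem intervalIntegrable_of_norm_le {E : Type*} [NormedAddCommGroup E] {f : ℝ → E} {C : ℝ}
    (hf : AEStronglyMeasurable f) (hC : ∀ t, ‖f t‖ ≤ C) (a b : ℝ) :
    IntervalIntegrable f volume a b :=
  intervalIntegrable_iff.2 <| Measure.integrableOn_of_bounded (by simp [uIoc]) hf (ae_of_all _ hC)

namespace Asymptotics

variable {α E F : Type*} [NormedAddCommGroup E] [NormedSpace ℝ E] [NormedAddCommGroup F]
  [NormedSpace ℝ F]

theorem IsLittleO.smul_of_isBigO_one {l : Filter α} {k : α → ℝ} {f : α → E} {g : α → F}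
    (hk : k =O[l] fun _ => (1 : ℝ)) (hf : f =o[l] g) : (fun x => k x • f x) =o[l] g := by
  simpa using hk.smul_isLittleO hf

variable {f : ℝ → E} {a c : ℝ} {m : ℕ}

theorem IsBigOWith.intervalIntegral_nhdsGT (hc : 0 ≤ c)
    (h : IsBigOWith c (𝓝[>] a) f fun s => (s - a) ^ m) :
    IsBigOWith c (𝓝[>] a) (fun t => ∫ s in a..t, f s) fun t => (t - a) ^ (m + 1) := by
  obtain ⟨b, hab, hb⟩ := mem_nhdsGT_iff_exists_Ioo_subset.1 h.bound
  rw [IsBigOWith_def]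
  filter_upwards [Ioo_mem_nhdsGT hab] with t ht
  have hbound : ∀ s ∈ uIoc a t, ‖f s‖ ≤ c * (t - a) ^ m := by
    intro s hs
    rw [uIoc_of_le ht.1.le] at hs
    calc ‖f s‖ ≤ c * ‖(s - a) ^ m‖ := hb ⟨hs.1, hs.2.trans_lt ht.2⟩
      _ ≤ c * (t - a) ^ m := by
        rw [norm_pow, Real.norm_of_nonneg (sub_nonneg.2 hs.1.le)]
        gcongr
        · exact sub_nonneg.2 hs.1.le
        · exact hs.2
  calc ‖∫ s in a..t, f s‖ ≤ c * (t - a) ^ m * |t - a| :=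
        intervalIntegral.norm_integral_le_of_norm_le_const hbound
    _ = c * ‖(t - a) ^ (m + 1)‖ := by
      rw [norm_pow, Real.norm_eq_abs, abs_of_pos (sub_pos.2 ht.1)]
      ring

theorem IsBigO.intervalIntegral_nhdsGT (h : f =O[𝓝[>] a] fun s => (s - a) ^ m) :
    (fun t => ∫ s in a..t, f s) =O[𝓝[>] a] fun t => (t - a) ^ (m + 1) :=
  let ⟨_, hc, hf⟩ := h.exists_nonneg
  (hf.intervalIntegral_nhdsGT hc).isBigO

theorem IsLittleO.intervalIntegral_nhdsGT (h : f =o[𝓝[>] a] fun s => (s - a) ^ m) :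
    (fun t => ∫ s in a..t, f s) =o[𝓝[>] a] fun t => (t - a) ^ (m + 1) :=
  isLittleO_iff_forall_isBigOWith.2 fun _ hc =>
    (isLittleO_iff_forall_isBigOWith.1 h hc).intervalIntegral_nhdsGT hc.le

end Asymptotics

namespace intervalIntegral

variable {ι E : Type*} [Fintype ι] [NormedAddCommGroup E] [NormedSpace ℝ E] {a b : ℝ}

theorem intervalIntegrable_sum_smul {w : ι → ℝ → ℝ} {u : ι → ℝ → E}
    (hw : ∀ k, IntervalIntegrable (w k) volume a b) (hu : ∀ k, ContinuousOn (u k) (uIcc a b)) :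
    IntervalIntegrable (fun s => ∑ k, w k s • u k s) volume a b := by
  simpa only [← Finset.sum_fn] using
    IntervalIntegrable.sum Finset.univ fun k _ => (hw k).smul_continuousOn (hu k)

theorem integral_sum_smul_sub {w : ι → ℝ → ℝ} {u v : ι → ℝ → E}
    (hw : ∀ k, IntervalIntegrable (w k) volume a b) (hu : ∀ k, ContinuousOn (u k) (uIcc a b))
    (hv : ∀ k, ContinuousOn (v k) (uIcc a b)) :
    (∫ s in a..b, ∑ k, w k s • u k s) - ∫ s in a..b, ∑ k, w k s • v k s =
      ∫ s in a..b, ∑ k, w k s • (u k s - v k s) := by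
  rw [← integral_sub (intervalIntegrable_sum_smul hw hu) (intervalIntegrable_sum_smul hw hv)]
  simp only [smul_sub, Finset.sum_sub_distrib]

variable [CompleteSpace E]

theorem sum_integral_smul_const {φ : ι → ℝ → ℝ} (hφ : ∀ k, IntervalIntegrable (φ k) volume a b)
    (c : ι → E) : ∑ k, (∫ s in a..b, φ k s) • c k = ∫ s in a..b, ∑ k, φ k s • c k := by
  rw [integral_finsetSum fun k _ => (hφ k).smul_continuousOn continuousOn_const]
  simp only [integral_smul_const]

theorem sum_iteratedIntegral_smul {F : Type*} [NormedAddCommGroup F] [NormedSpace ℝ F]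
    {w : ι → ℝ → ℝ} (hw : ∀ k a b, IntervalIntegrable (w k) volume a b)
    (A : ι → F →L[ℝ] E) (c : ι → F) (a t : ℝ) :
    ∑ k₁, ∑ k₂, (∫ s in a..t, ∫ r in a..s, w k₁ s * w k₂ r) • A k₁ (c k₂) =
      ∫ s in a..t, ∑ k, w k s • A k (∑ j, (∫ r in a..s, w j r) • c j) := by
  simp only [integral_const_mul]
  rw [← Fintype.sum_prod_type',
    sum_integral_smul_const (φ := fun (p : ι × ι) s => w p.1 s * ∫ r in a..s, w p.2 r)
      fun p => (hw p.1 a t).mul_continuousOn (continuous_primitive (hw p.2) a).continuousOn]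
  simp only [Fintype.sum_prod_type, map_sum, map_smul, Finset.smul_sum, smul_smul]

theorem integral_eq_sub_of_hasDerivWithinAt_Icc {f f' : ℝ → E} (hab : a ≤ b)
    (hf : ∀ t ∈ Icc a b, HasDerivWithinAt f (f' t) (Icc a b) t)
    (hf' : IntervalIntegrable f' volume a b) :
    ∫ t in a..b, f' t = f b - f a :=
  integral_eq_sub_of_hasDeriv_right_of_le hab (fun t ht => (hf t ht).continuousWithinAt)
    (fun t ht => (hf t (Ioo_subset_Icc_self ht)).mono_of_mem_nhdsWithin
      (Icc_mem_nhdsGT_of_mem (Ioo_subset_Ico_self ht))) hf'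

end intervalIntegral

open intervalIntegral

section WeightedFlow

variable {ι E : Type*} [Fintype ι] [NormedAddCommGroup E] [NormedSpace ℝ E]

def IsWeightedFlow (g : ι → E → E) (w : ι → ℝ → ℝ) (θ : ℝ → E) (t₀ t₁ : ℝ) : Prop :=
  ∀ t ∈ Icc t₀ t₁, HasDerivWithinAt θ (-∑ k, w k t • g k (θ t)) (Icc t₀ t₁) t

noncomputable def firstOrderRemainder (g : ι → E → E) (w : ι → ℝ → ℝ) (θ : ℝ → E)
    (t₀ t : ℝ) : E :=
  θ t - θ t₀ + ∑ k, (∫ s in t₀..t, w k s) • g k (θ t₀)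

noncomputable def secondOrderRemainder (g : ι → E → E) (w : ι → ℝ → ℝ) (θ : ℝ → E)
    (t₀ t : ℝ) : E :=
  firstOrderRemainder g w θ t₀ t -
    ∑ k₁, ∑ k₂, (∫ s in t₀..t, ∫ r in t₀..s, w k₁ s * w k₂ r) •
      fderiv ℝ (g k₁) (θ t₀) (g k₂ (θ t₀))

variable {g : ι → E → E} {w : ι → ℝ → ℝ} {θ : ℝ → E} {t₀ t₁ : ℝ}

namespace IsWeightedFlow

theorem mono_right (hθ : IsWeightedFlow g w θ t₀ t₁) {t : ℝ} (ht : t ∈ Icc t₀ t₁) :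
    IsWeightedFlow g w θ t₀ t :=
  fun s hs => (hθ s ⟨hs.1, hs.2.trans ht.2⟩).mono (Icc_subset_Icc_right ht.2)

theorem continuousOn_comp (hθ : IsWeightedFlow g w θ t₀ t₁) {F : Type*} [TopologicalSpace F]
    {f : E → F} (hf : Continuous f) (h : t₀ ≤ t₁) :
    ContinuousOn (fun s => f (θ s)) (uIcc t₀ t₁) := by
  rw [uIcc_of_le h]
  exact hf.comp_continuousOn fun s hs => (hθ s hs).continuousWithinAt

theorem tendsto_nhdsGT (hθ : IsWeightedFlow g w θ t₀ t₁) (h : t₀ < t₁) :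
    Tendsto θ (𝓝[>] t₀) (𝓝 (θ t₀)) :=
  ((hθ t₀ ⟨le_rfl, h.le⟩).continuousWithinAt.mono_of_mem_nhdsWithin (Icc_mem_nhdsGT h)).tendsto

variable [CompleteSpace E]

theorem sub_eq_integral (hθ : IsWeightedFlow g w θ t₀ t₁) (hg : ∀ k, Continuous (g k))
    (hw : ∀ k a b, IntervalIntegrable (w k) volume a b) (h : t₀ ≤ t₁) :
    θ t₁ - θ t₀ = -∫ s in t₀..t₁, ∑ k, w k s • g k (θ s) := by
  rw [← intervalIntegral.integral_neg, integral_eq_sub_of_hasDerivWithinAt_Icc h hθ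
    (intervalIntegrable_sum_smul (fun k => hw k _ _) fun k => hθ.continuousOn_comp (hg k) h).neg]

theorem firstOrderRemainder_eq_integral (hθ : IsWeightedFlow g w θ t₀ t₁)
    (hg : ∀ k, Continuous (g k)) (hw : ∀ k a b, IntervalIntegrable (w k) volume a b)
    (h : t₀ ≤ t₁) :
    firstOrderRemainder g w θ t₀ t₁ = ∫ s in t₀..t₁, ∑ k, w k s • (g k (θ t₀) - g k (θ s)) := by
  rw [firstOrderRemainder, hθ.sub_eq_integral hg hw h, sum_integral_smul_const fun k => hw k _ _,
    ← integral_sum_smul_sub (fun k => hw k _ _) (fun k => continuousOn_const)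
      fun k => hθ.continuousOn_comp (hg k) h]
  abel

theorem secondOrderRemainder_eq_integral (hθ : IsWeightedFlow g w θ t₀ t₁)
    (hg : ∀ k, Continuous (g k)) (hw : ∀ k a b, IntervalIntegrable (w k) volume a b)
    (h : t₀ ≤ t₁) :
    secondOrderRemainder g w θ t₀ t₁ = ∫ s in t₀..t₁, ∑ k, w k s • (g k (θ t₀) - g k (θ s) -
      fderiv ℝ (g k) (θ t₀) (∑ j, (∫ r in t₀..s, w j r) • g j (θ t₀))) := by
  rw [secondOrderRemainder, hθ.firstOrderRemainder_eq_integral hg hw h,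
    sum_iteratedIntegral_smul hw, integral_sum_smul_sub (fun k => hw k _ _)]
  · exact fun k => continuousOn_const.sub (hθ.continuousOn_comp (hg k) h)
  · exact fun k => ((fderiv ℝ (g k) (θ t₀)).continuous.comp (continuous_finsetSum _ fun j _ =>
      (continuous_primitive (hw j) t₀).smul continuous_const)).continuousOn

theorem isBigO_sub (hθ : IsWeightedFlow g w θ t₀ t₁) (hg : ∀ k, Continuous (g k))
    (hw : ∀ k a b, IntervalIntegrable (w k) volume a b)
    (hw_bdd : ∀ k, w k =O[𝓝[>] t₀] fun _ => (1 : ℝ)) (h : t₀ < t₁) :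
    (fun t => θ t - θ t₀) =O[𝓝[>] t₀] fun t => t - t₀ := by
  have hvel : (fun s => ∑ k, w k s • g k (θ s)) =O[𝓝[>] t₀] fun s => (s - t₀) ^ 0 := by
    simpa using IsBigO.fun_sum fun k _ =>
      (hw_bdd k).smul ((((hg k).tendsto _).comp (hθ.tendsto_nhdsGT h)).isBigO_one (F := ℝ))
  refine hvel.intervalIntegral_nhdsGT.neg_left.congr' ?_ (Eventually.of_forall fun t => pow_one _)
  filter_upwards [Icc_mem_nhdsGT h] with t ht
  exact ((hθ.mono_right ht).sub_eq_integral hg hw ht.1).symm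

theorem isLittleO_firstOrderRemainder (hθ : IsWeightedFlow g w θ t₀ t₁)
    (hg : ∀ k, Continuous (g k)) (hw : ∀ k a b, IntervalIntegrable (w k) volume a b)
    (hw_bdd : ∀ k, w k =O[𝓝[>] t₀] fun _ => (1 : ℝ)) (h : t₀ < t₁) :
    (fun t => firstOrderRemainder g w θ t₀ t) =o[𝓝[>] t₀] fun t => t - t₀ := by
  have hintegrand : (fun s => ∑ k, w k s • (g k (θ t₀) - g k (θ s))) =o[𝓝[>] t₀]
      fun s => (s - t₀) ^ 0 := by
    simp only [pow_zero]
    refine IsLittleO.fun_sum fun k _ => IsLittleO.smul_of_isBigO_one (hw_bdd k) ?_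
    refine (isLittleO_one_iff ℝ).2 ?_
    simpa using (((hg k).tendsto _).comp (hθ.tendsto_nhdsGT h)).const_sub (g k (θ t₀))
  refine hintegrand.intervalIntegral_nhdsGT.congr' ?_ (Eventually.of_forall fun t => pow_one _)
  filter_upwards [Icc_mem_nhdsGT h] with t ht
  exact ((hθ.mono_right ht).firstOrderRemainder_eq_integral hg hw ht.1).symm

theorem isLittleO_secondOrderRemainder (hθ : IsWeightedFlow g w θ t₀ t₁)
    (hg : ∀ k, Continuous (g k)) (hgd : ∀ k, DifferentiableAt ℝ (g k) (θ t₀))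
    (hw : ∀ k a b, IntervalIntegrable (w k) volume a b)
    (hw_bdd : ∀ k, w k =O[𝓝[>] t₀] fun _ => (1 : ℝ)) (h : t₀ < t₁) :
    (fun t => secondOrderRemainder g w θ t₀ t) =o[𝓝[>] t₀] fun t => (t - t₀) ^ 2 := by
  set H := fun k => fderiv ℝ (g k) (θ t₀)
  have htaylor : ∀ k, (fun s => g k (θ s) - g k (θ t₀) - H k (θ s - θ t₀)) =o[𝓝[>] t₀]
      fun s => s - t₀ := fun k =>
    ((hgd k).hasFDerivAt.isLittleO.comp_tendsto (hθ.tendsto_nhdsGT h)).trans_isBigO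
      (hθ.isBigO_sub hg hw hw_bdd h)
  have hfirst : ∀ k, (fun s => H k (firstOrderRemainder g w θ t₀ s)) =o[𝓝[>] t₀]
      fun s => s - t₀ := fun k =>
    ((H k).isBigO_comp _ _).trans_isLittleO (hθ.isLittleO_firstOrderRemainder hg hw hw_bdd h)
  have hintegrand : (fun s => ∑ k, w k s • (g k (θ t₀) - g k (θ s) -
      H k (∑ j, (∫ r in t₀..s, w j r) • g j (θ t₀)))) =o[𝓝[>] t₀] fun s => (s - t₀) ^ 1 := by
    simp only [pow_one]
    refine IsLittleO.fun_sum fun k _ => IsLittleO.smul_of_isBigO_one (hw_bdd k) ?_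
    refine ((htaylor k).add (hfirst k)).neg_left.congr_left fun s => ?_
    simp only [firstOrderRemainder, map_add, map_sub]
    abel
  refine hintegrand.intervalIntegral_nhdsGT.congr' ?_ EventuallyEq.rfl
  filter_upwards [Icc_mem_nhdsGT h] with t ht
  exact ((hθ.mono_right ht).secondOrderRemainder_eq_integral hg hw ht.1).symm

end IsWeightedFlow

end WeightedFlow

/-- Second-order expansion of a multi-domain gradient-descent trajectory with a
weight schedule: if `θ'(t) = −Σ_k w_k(t)·∇L_k(θ(t))` on `[t₀, t₀+T]` with each
`w_k` bounded, nonnegative and right-continuous, then as `τ → 0⁺`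
`θ(t₀+τ) = θ(t₀) − Σ_k (∫ w_k)·∇L_k(θ(t₀))
    + Σ_{k₁,k₂} (∫∫ w_{k₁}(s)w_{k₂}(r))·Hess L_{k₁}(θ(t₀))∇L_{k₂}(θ(t₀)) + o(τ²)`. -/
theorem trajectory_second_order_expansion {n K : ℕ}
    (L : Fin K → EuclideanSpace ℝ (Fin n) → ℝ)
    (hL : ∀ k, ContDiff ℝ 2 (L k))
    (w : Fin K → ℝ → ℝ)
    (hw_bdd : ∀ k, ∃ C : ℝ, ∀ t, w k t ≤ C)
    (hw_nonneg : ∀ k t, 0 ≤ w k t)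
    (hw_rc : ∀ k t, ContinuousWithinAt (w k) (Set.Ici t) t)
    (t₀ T : ℝ) (hT : 0 < T)
    (θ : ℝ → EuclideanSpace ℝ (Fin n))
    (hθ : ∀ t ∈ Set.Icc t₀ (t₀ + T),
      HasDerivWithinAt θ (-(∑ k, w k t • gradient (L k) (θ t)))
        (Set.Icc t₀ (t₀ + T)) t) :
    (fun τ : ℝ =>
        θ (t₀ + τ) - θ t₀
          + ∑ k, (∫ s in t₀..(t₀ + τ), w k s) • gradient (L k) (θ t₀)
          - ∑ k₁, ∑ k₂,
              (∫ s in t₀..(t₀ + τ), ∫ r in t₀..s, w k₁ s * w k₂ r) •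
                fderiv ℝ (gradient (L k₁)) (θ t₀) (gradient (L k₂) (θ t₀)))
      =o[𝓝[>] 0] fun τ : ℝ => τ ^ 2 := by
  have hg : ∀ k, ContDiff ℝ 1 (gradient (L k)) := fun k =>
    (InnerProductSpace.toDual ℝ _).symm.toLinearIsometry.toContinuousLinearMap.contDiff.comp
      ((hL k).fderiv_right (by norm_num))
  have hw_norm : ∀ k, ∃ C, ∀ t, ‖w k t‖ ≤ C := fun k =>
    (hw_bdd k).imp fun C hC t => (Real.norm_of_nonneg (hw_nonneg k t)).trans_le (hC t)
  have hw_int : ∀ k a b, IntervalIntegrable (w k) volume a b := fun k =>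
    let ⟨_, hC⟩ := hw_norm k
    intervalIntegrable_of_norm_le
      (measurable_of_continuousWithinAt_Ici (hw_rc k)).aestronglyMeasurable hC
  have hw_O : ∀ k, w k =O[𝓝[>] t₀] fun _ => (1 : ℝ) := fun k =>
    let ⟨C, hC⟩ := hw_norm k
    (isBigO_one_iff ℝ).2 (isBoundedUnder_of ⟨C, hC⟩)
  have hshift : Tendsto (fun τ => t₀ + τ) (𝓝[>] 0) (𝓝[>] t₀) := by
    refine tendsto_nhdsWithin_iff.2 ⟨?_, eventually_nhdsWithin_of_forall fun τ hτ => ?_⟩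
    · simpa using ((continuous_const_add t₀).tendsto 0).mono_left nhdsWithin_le_nhds
    · simpa using hτ
  have hθ' : IsWeightedFlow (fun k => gradient (L k)) w θ t₀ (t₀ + T) := hθ
  exact ((hθ'.isLittleO_secondOrderRemainder (fun k => (hg k).continuous)
    (fun k => (hg k).differentiable one_ne_zero _) hw_int hw_O (by linarith)).comp_tendsto
      hshift).congr_right fun τ => by rw [Function.comp_apply, add_sub_cancel_left]
end

section
/- Let A₁, A₂ be n×n real matrices and b₁, b₂ ∈ ℝⁿ, let Φₐ(t, θ) = bₐ + exp(tAₐ)·(θ − bₐ) for a = 1, 2, and fix θ ∈ ℝⁿ. Define D : ℝ × ℝ → ℝⁿ by D(t₁, t₂) = Φ₁(t₁, Φ₂(t₂, θ)) − Φ₂(t₂, Φ₁(t₁, θ)). Then the mixed second partial derivative of D at (0,0) equals ∂²D/∂t₁∂t₂(0,0) = (A₁A₂ − A₂A₁)·θ − A₁A₂·b₂ + A₂A₁·b₁. -/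
/-! At a fixed time, `affineFlow A b t` is an affine map with linear part `exp (tA)`, and in time
it moves with velocity `A (θ - b)` at `t = 0`. Differentiating `D` in `t₂` at `0` therefore gives
`exp (t₁A₁) A₂ (θ - b₂) - A₂ (Φ₁(t₁, θ) - b₂)`, and differentiating this in `t₁` at `0` gives
`A₁A₂ (θ - b₂) - A₂A₁ (θ - b₁)`. -/

/-- The flow of the affine vector field `v(θ) = A(θ − b)`
(the gradient field of the quadratic loss `½(θ−b)ᵀA(θ−b)`). -/
noncomputable def affineFlow {n : ℕ} (A : Matrix (Fin n) (Fin n) ℝ)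
    (b : Fin n → ℝ) (t : ℝ) (θ : Fin n → ℝ) : Fin n → ℝ :=
  b + (NormedSpace.exp (t • A)).mulVec (θ - b)

open NormedSpace Matrix

-- Any matrix norm would do: it only makes `exp` on matrices amenable to the calculus library.
attribute [local instance] Matrix.linftyOpNormedAddCommGroup Matrix.linftyOpNormedSpace
  Matrix.linftyOpNormedRing Matrix.linftyOpNormedAlgebra

section MatrixDeriv

variable {m n : Type*} [Fintype m] [Fintype n]

theorem HasDerivAt.matrix_mulVec_const {M : ℝ → Matrix m n ℝ} {M' : Matrix m n ℝ} {t : ℝ}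
    (hM : HasDerivAt M M' t) (v : n → ℝ) :
    HasDerivAt (fun s => M s *ᵥ v) (M' *ᵥ v) t := by
  exact (LinearMap.toContinuousLinearMap ((mulVecBilin ℝ ℝ).flip v)).hasFDerivAt.comp_hasDerivAt
    t hM

theorem HasDerivAt.const_matrix_mulVec (M : Matrix m n ℝ) {f : ℝ → n → ℝ} {f' : n → ℝ} {t : ℝ}
    (hf : HasDerivAt f f' t) :
    HasDerivAt (fun s => M *ᵥ f s) (M *ᵥ f') t :=
  (LinearMap.toContinuousLinearMap M.mulVecLin).hasFDerivAt.comp_hasDerivAt t hf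

theorem hasDerivAt_exp_smul_mulVec [DecidableEq m] (A : Matrix m m ℝ) (v : m → ℝ) (t : ℝ) :
    HasDerivAt (fun s : ℝ => exp (s • A) *ᵥ v) ((A * exp (t • A)) *ᵥ v) t :=
  (hasDerivAt_exp_smul_const' A t).matrix_mulVec_const v

end MatrixDeriv

section AffineFlow

variable {n : ℕ} (A : Matrix (Fin n) (Fin n) ℝ) (b : Fin n → ℝ)

@[simp]
theorem affineFlow_zero (θ : Fin n → ℝ) : affineFlow A b 0 θ = θ := by
  simp [affineFlow]

theorem hasDerivAt_affineFlow (θ : Fin n → ℝ) (t : ℝ) :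
    HasDerivAt (fun s => affineFlow A b s θ) (A *ᵥ (affineFlow A b t θ - b)) t := by
  simpa [affineFlow, mulVec_mulVec] using
    (hasDerivAt_exp_smul_mulVec A (θ - b) t).const_add b

theorem hasDerivAt_affineFlow_zero (θ : Fin n → ℝ) :
    HasDerivAt (fun s => affineFlow A b s θ) (A *ᵥ (θ - b)) 0 := by
  simpa using hasDerivAt_affineFlow A b θ 0

theorem hasDerivAt_affineFlow_comp {f : ℝ → Fin n → ℝ} {f' : Fin n → ℝ} {t : ℝ}
    (hf : HasDerivAt f f' t) (τ : ℝ) :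
    HasDerivAt (fun s => affineFlow A b τ (f s)) (exp (τ • A) *ᵥ f') t :=
  ((hf.sub_const b).const_matrix_mulVec (exp (τ • A))).const_add b

end AffineFlow

/-- The infinitesimal commutator of the two affine (quadratic-loss gradient)
flows: with `D(t₁, t₂) = Φ₁(t₁, Φ₂(t₂, θ)) − Φ₂(t₂, Φ₁(t₁, θ))`, the mixed
second partial derivative of `D` at `(0, 0)` equals
`(A₁A₂ − A₂A₁)θ − A₁A₂b₂ + A₂A₁b₁`. -/
theorem affineFlow_mixed_partial_commutator {n : ℕ}
    (A₁ A₂ : Matrix (Fin n) (Fin n) ℝ) (b₁ b₂ : Fin n → ℝ) (θ : Fin n → ℝ)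
    (D : ℝ → ℝ → Fin n → ℝ)
    (hD : ∀ t₁ t₂ : ℝ, D t₁ t₂ =
      affineFlow A₁ b₁ t₁ (affineFlow A₂ b₂ t₂ θ)
        - affineFlow A₂ b₂ t₂ (affineFlow A₁ b₁ t₁ θ)) :
    deriv (fun t₁ : ℝ => deriv (fun t₂ : ℝ => D t₁ t₂) 0) 0 =
      (A₁ * A₂ - A₂ * A₁).mulVec θ - (A₁ * A₂).mulVec b₂ + (A₂ * A₁).mulVec b₁ := by
  have inner : ∀ t₁, HasDerivAt (fun t₂ => D t₁ t₂)
      (exp (t₁ • A₁) *ᵥ (A₂ *ᵥ (θ - b₂)) - A₂ *ᵥ (affineFlow A₁ b₁ t₁ θ - b₂)) 0 := by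
    intro t₁
    simp only [hD]
    exact (hasDerivAt_affineFlow_comp A₁ b₁ (hasDerivAt_affineFlow_zero A₂ b₂ θ) t₁).sub
      (hasDerivAt_affineFlow_zero A₂ b₂ _)
  have outer : HasDerivAt
      (fun t₁ => exp (t₁ • A₁) *ᵥ (A₂ *ᵥ (θ - b₂)) - A₂ *ᵥ (affineFlow A₁ b₁ t₁ θ - b₂))
      (A₁ *ᵥ (A₂ *ᵥ (θ - b₂)) - A₂ *ᵥ (A₁ *ᵥ (θ - b₁))) 0 := by
    have hexp := hasDerivAt_exp_smul_mulVec A₁ (A₂ *ᵥ (θ - b₂)) 0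
    rw [zero_smul, exp_zero, mul_one] at hexp
    exact hexp.sub (((hasDerivAt_affineFlow_zero A₁ b₁ θ).sub_const b₂).const_matrix_mulVec A₂)
  rw [funext fun t₁ => (inner t₁).deriv, outer.deriv]
  simp only [mulVec_mulVec, mulVec_sub, sub_mulVec]
  abel
end
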